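/- arXiv:2605.31423 — 4 statements merged into one kernel-verified Lean document; each statement's English description precedes it below -/
import Mathlib

section
/- Suppose for every l ∈ [L] we have W_V^1 W_O^1 ··· W_V^{l-1} W_O^{l-1} W_Q^l = E R_V^1 ··· R_V^{l-1} R_Q^l and W_V^1 W_O^1 ··· W_V^{l-1} W_O^{l-1} W_K^l = E R_V^1 ··· R_V^{l-1} R_K^l. Then for any input X^0 ∈ R^{n × d_in}, the attention matrices of the target single-head transformer and of the universal transformer (run on embedded input X^0 E) coincide at every layer: A^l = Ã^l for all l ∈ [L]. -/
open Matrix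

/-- Row-wise softmax of a matrix. -/
noncomputable def softmax {n k : ℕ} (M : Matrix (Fin n) (Fin k) ℝ) :
    Matrix (Fin n) (Fin k) ℝ :=
  Matrix.of fun i j => Real.exp (M i j) / ∑ t, Real.exp (M i t)

/-- Attention matrix `softmax((X W_Q)(X W_K)ᵀ)`. -/
noncomputable def attn {n p d : ℕ} (WQ WK : Matrix (Fin p) (Fin d) ℝ)
    (X : Matrix (Fin n) (Fin p) ℝ) : Matrix (Fin n) (Fin n) ℝ :=
  softmax ((X * WQ) * (X * WK)ᵀ)

/-- Target single-head transformer layers. -/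
noncomputable def tLayers {n din d : ℕ}
    (WQ WK WV : ℕ → Matrix (Fin din) (Fin d) ℝ)
    (WO : ℕ → Matrix (Fin d) (Fin din) ℝ)
    (X0 : Matrix (Fin n) (Fin din) ℝ) : ℕ → Matrix (Fin n) (Fin din) ℝ
  | 0 => X0
  | l + 1 =>
      attn (WQ l) (WK l) (tLayers WQ WK WV WO X0 l) *
        tLayers WQ WK WV WO X0 l * WV l * WO l

/-- Universal transformer layers, run on the embedded input `X̃^0 = X^0 E`. -/
noncomputable def uLayers {n din d m : ℕ}
    (RQ RK : ℕ → Matrix (Fin m) (Fin d) ℝ)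
    (RV : ℕ → Matrix (Fin m) (Fin m) ℝ)
    (E : Matrix (Fin din) (Fin m) ℝ)
    (X0 : Matrix (Fin n) (Fin din) ℝ) : ℕ → Matrix (Fin n) (Fin m) ℝ
  | 0 => X0 * E
  | l + 1 =>
      attn (RQ l) (RK l) (uLayers RQ RK RV E X0 l) *
        uLayers RQ RK RV E X0 l * RV l

/-- `wProd … l = (W_V^1 W_O^1) ⋯ (W_V^l W_O^l)`. -/
noncomputable def wProd {din d : ℕ}
    (WV : ℕ → Matrix (Fin din) (Fin d) ℝ)
    (WO : ℕ → Matrix (Fin d) (Fin din) ℝ) : ℕ → Matrix (Fin din) (Fin din) ℝ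
  | 0 => 1
  | l + 1 => wProd WV WO l * (WV l * WO l)

/-- `rProd … l = R_V^1 ⋯ R_V^l`. -/
noncomputable def rProd {m : ℕ}
    (RV : ℕ → Matrix (Fin m) (Fin m) ℝ) : ℕ → Matrix (Fin m) (Fin m) ℝ
  | 0 => 1
  | l + 1 => rProd RV l * RV l


/-- Key invariant: for `l ≤ L`, multiplying the layer-`l` outputs by matched
matrices gives equal results. -/
theorem key_lemma {n din d m L : ℕ}
    (WQ WK WV : ℕ → Matrix (Fin din) (Fin d) ℝ)
    (WO : ℕ → Matrix (Fin d) (Fin din) ℝ)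
    (RQ RK : ℕ → Matrix (Fin m) (Fin d) ℝ)
    (RV : ℕ → Matrix (Fin m) (Fin m) ℝ)
    (E : Matrix (Fin din) (Fin m) ℝ)
    (hQ : ∀ l < L, wProd WV WO l * WQ l = E * rProd RV l * RQ l)
    (hK : ∀ l < L, wProd WV WO l * WK l = E * rProd RV l * RK l)
    (X0 : Matrix (Fin n) (Fin din) ℝ) :
    ∀ l, l ≤ L → ∀ k (M : Matrix (Fin din) (Fin k) ℝ)
      (N : Matrix (Fin m) (Fin k) ℝ),
      wProd WV WO l * M = E * rProd RV l * N →
      tLayers WQ WK WV WO X0 l * M = uLayers RQ RK RV E X0 l * N := by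
  intro l
  induction l with
  | zero =>
      intro _ k M N h
      simp [wProd, rProd] at h
      simp [tLayers, uLayers, h, Matrix.mul_assoc]
  | succ l ih =>
      intro hl k M N h
      have hlL : l < L := hl
      have hle : l ≤ L := le_of_lt hlL
      have hattn : attn (WQ l) (WK l) (tLayers WQ WK WV WO X0 l) =
          attn (RQ l) (RK l) (uLayers RQ RK RV E X0 l) := by
        have hq := ih hle d (WQ l) (RQ l) (hQ l hlL)
        have hk := ih hle d (WK l) (RK l) (hK l hlL)
        unfold attn
        rw [hq, hk]
      have hrec : tLayers WQ WK WV WO X0 l * (WV l * WO l * M) =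
          uLayers RQ RK RV E X0 l * (RV l * N) := by
        apply ih hle
        calc wProd WV WO l * (WV l * WO l * M)
            = wProd WV WO (l + 1) * M := by
              simp [wProd, Matrix.mul_assoc]
          _ = E * rProd RV (l + 1) * N := h
          _ = E * rProd RV l * (RV l * N) := by
              simp [rProd, Matrix.mul_assoc]
      show attn (WQ l) (WK l) (tLayers WQ WK WV WO X0 l) *
          tLayers WQ WK WV WO X0 l * WV l * WO l * M = _
      rw [hattn]
      show _ = attn (RQ l) (RK l) (uLayers RQ RK RV E X0 l) *
          uLayers RQ RK RV E X0 l * RV l * N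
      simp only [Matrix.mul_assoc] at hrec ⊢
      rw [hrec]

/-- equal attention, single head: if the query/key matching
conditions hold for every layer `l ∈ [L]`, then the attention matrices of the
target transformer and of the universal transformer coincide at every layer. -/
theorem stmt2 {n din d m L : ℕ}
    (WQ WK WV : ℕ → Matrix (Fin din) (Fin d) ℝ)
    (WO : ℕ → Matrix (Fin d) (Fin din) ℝ)
    (RQ RK : ℕ → Matrix (Fin m) (Fin d) ℝ)
    (RV : ℕ → Matrix (Fin m) (Fin m) ℝ)
    (E : Matrix (Fin din) (Fin m) ℝ)
    (hQ : ∀ l < L, wProd WV WO l * WQ l = E * rProd RV l * RQ l)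
    (hK : ∀ l < L, wProd WV WO l * WK l = E * rProd RV l * RK l)
    (X0 : Matrix (Fin n) (Fin din) ℝ) :
    ∀ l < L,
      attn (WQ l) (WK l) (tLayers WQ WK WV WO X0 l) =
        attn (RQ l) (RK l) (uLayers RQ RK RV E X0 l) := by
  intro l hl
  have hq := key_lemma WQ WK WV WO RQ RK RV E hQ hK X0 l (le_of_lt hl) d
    (WQ l) (RQ l) (hQ l hl)
  have hk := key_lemma WQ WK WV WO RQ RK RV E hQ hK X0 l (le_of_lt hl) d
    (WK l) (RK l) (hK l hl)
  unfold attn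
  rw [hq, hk]
end

section
/- Suppose, in addition to the attention-matching conditions W_V^1 W_O^1 ··· W_V^{l-1} W_O^{l-1} W_Q^l = E R_V^1 ··· R_V^{l-1} R_Q^l and similarly for the key matrices for all l ∈ [L], we also have W_V^1 W_O^1 ··· W_V^L W_O^L = E R_V^1 ··· R_V^L U. Then for every input X^0 ∈ R^{n × d_in}, the universal transformer output X̃^L U equals the target transformer output X^L. -/
open Matrix

/-- equal input-output behavior, single head: under the
query/key matching conditions together with the value-path matching condition
`W_V^1 W_O^1 ⋯ W_V^L W_O^L = E R_V^1 ⋯ R_V^L U`, the universal transformer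
output `X̃^L U` equals the target transformer output `X^L` for every input. -/
theorem stmt3 {n din d m L : ℕ}
    (WQ WK WV : ℕ → Matrix (Fin din) (Fin d) ℝ)
    (WO : ℕ → Matrix (Fin d) (Fin din) ℝ)
    (RQ RK : ℕ → Matrix (Fin m) (Fin d) ℝ)
    (RV : ℕ → Matrix (Fin m) (Fin m) ℝ)
    (E : Matrix (Fin din) (Fin m) ℝ)
    (U : Matrix (Fin m) (Fin din) ℝ)
    (hQ : ∀ l < L, wProd WV WO l * WQ l = E * rProd RV l * RQ l)
    (hK : ∀ l < L, wProd WV WO l * WK l = E * rProd RV l * RK l)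
    (hOV : wProd WV WO L = E * rProd RV L * U)
    (X0 : Matrix (Fin n) (Fin din) ℝ) :
    uLayers RQ RK RV E X0 L * U = tLayers WQ WK WV WO X0 L := by
  have key : ∀ l ≤ L, ∃ P : Matrix (Fin n) (Fin n) ℝ,
      tLayers WQ WK WV WO X0 l = P * (X0 * wProd WV WO l) ∧
      uLayers RQ RK RV E X0 l = P * (X0 * (E * rProd RV l)) := by
    intro l hl
    induction l with
    | zero =>
        refine ⟨1, ?_, ?_⟩ <;> simp [tLayers, uLayers, wProd, rProd, Matrix.mul_one]
    | succ l ih =>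
        obtain ⟨P, ht, hu⟩ := ih (le_of_lt (Nat.lt_of_succ_le hl))
        have hlL : l < L := Nat.lt_of_succ_le hl
        have hattn : attn (WQ l) (WK l) (tLayers WQ WK WV WO X0 l)
            = attn (RQ l) (RK l) (uLayers RQ RK RV E X0 l) := by
          unfold attn

          have h1 : tLayers WQ WK WV WO X0 l * WQ l
              = uLayers RQ RK RV E X0 l * RQ l := by
            rw [ht, hu]
            calc P * (X0 * wProd WV WO l) * WQ l
                = P * (X0 * (wProd WV WO l * WQ l)) := by
                  simp [Matrix.mul_assoc]
              _ = P * (X0 * (E * rProd RV l * RQ l)) := by rw [hQ l hlL]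
              _ = P * (X0 * (E * rProd RV l)) * RQ l := by
                  simp [Matrix.mul_assoc]
          have h2 : tLayers WQ WK WV WO X0 l * WK l
              = uLayers RQ RK RV E X0 l * RK l := by
            rw [ht, hu]
            calc P * (X0 * wProd WV WO l) * WK l
                = P * (X0 * (wProd WV WO l * WK l)) := by
                  simp [Matrix.mul_assoc]
              _ = P * (X0 * (E * rProd RV l * RK l)) := by rw [hK l hlL]
              _ = P * (X0 * (E * rProd RV l)) * RK l := by
                  simp [Matrix.mul_assoc]
          rw [h1, h2]
        refine ⟨attn (WQ l) (WK l) (tLayers WQ WK WV WO X0 l) * P, ?_, ?_⟩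
        · show attn (WQ l) (WK l) (tLayers WQ WK WV WO X0 l) *
            tLayers WQ WK WV WO X0 l * WV l * WO l = _
          rw [ht]
          simp [wProd, Matrix.mul_assoc]
        · show attn (RQ l) (RK l) (uLayers RQ RK RV E X0 l) *
            uLayers RQ RK RV E X0 l * RV l = _
          rw [← hattn, hu]
          simp [rProd, Matrix.mul_assoc]
  obtain ⟨P, ht, hu⟩ := key L le_rfl
  rw [hu, ht, hOV]
  simp [Matrix.mul_assoc]
end

section
/- Suppose m² < H^L. Then for any collection of m×m real matrices {R^{l,h}}_{l∈[L],h∈[H]}, there exists a collection of scalars {W^{l,h} ∈ R}_{l∈[L],h∈[H]} such that for every pair of 1×m matrices E and U, there is some (h_1,...,h_L) ∈ [H]^L with E (Π_{l=1}^L R^{l,h_l}) U^T ≠ Π_{l=1}^L W^{l,h_l}. -/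
open Matrix

/-- if `m² < H^L`, then for any matrices
`{R^{l,h}} ⊂ ℝ^{m×m}` there exist scalars `{W^{l,h}} ⊂ ℝ` such that for every
pair of `1×m` matrices `E, U` there is a head sequence `(h_1,…,h_L)` with
`E (Π_l R^{l,h_l}) Uᵀ ≠ Π_l W^{l,h_l}`. -/
theorem stmt16 {m H L : ℕ} (hm : m ^ 2 < H ^ L)
    (R : Fin L → Fin H → Matrix (Fin m) (Fin m) ℝ) :
    ∃ W : Fin L → Fin H → ℝ,
      ∀ E U : Matrix (Fin 1) (Fin m) ℝ,
        ∃ hs : Fin L → Fin H,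
          (E * (List.ofFn fun l : Fin L => R l (hs l)).prod * Uᵀ) 0 0 ≠
            ∏ l : Fin L, W l (hs l) := by
  classical
  set P : (Fin L → Fin H) → Matrix (Fin m) (Fin m) ℝ :=
    fun hs => (List.ofFn fun l : Fin L => R l (hs l)).prod with hP
  let Φ : Matrix (Fin m) (Fin m) ℝ →ₗ[ℝ] ((Fin L → Fin H) → ℝ) :=
    { toFun := fun X hs => ((P hs) * X).trace
      map_add' := by intro X Y; funext hs; simp [Matrix.mul_add]
      map_smul' := by intro c X; funext hs; simp [Matrix.mul_smul] }
  have hrange : LinearMap.range Φ ≠ ⊤ := by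
    intro h
    have h1 : Module.finrank ℝ (LinearMap.range Φ) ≤ m ^ 2 := by
      have := LinearMap.finrank_range_le Φ
      simpa [Module.finrank_matrix, pow_two] using this
    rw [h, finrank_top] at h1
    have h2 : Module.finrank ℝ ((Fin L → Fin H) → ℝ) = H ^ L := by
      simp [Module.finrank_pi]
    omega
  have hex : ∃ hs0 : Fin L → Fin H, Pi.single hs0 (1:ℝ) ∉ LinearMap.range Φ := by
    by_contra hc
    push_neg at hc
    apply hrange
    rw [eq_top_iff, ← (Pi.basisFun ℝ (Fin L → Fin H)).span_eq]
    refine Submodule.span_le.2 ?_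
    rintro _ ⟨hs0, rfl⟩
    simpa [Pi.basisFun_apply] using hc hs0
  obtain ⟨hs0, hns⟩ := hex
  refine ⟨fun l h => if h = hs0 l then 1 else 0, ?_⟩
  intro E U
  by_contra hc
  push_neg at hc
  apply hns
  refine ⟨Uᵀ * E, ?_⟩
  funext hs
  have key : Φ (Uᵀ * E) hs = (E * P hs * Uᵀ) 0 0 := by
    show ((P hs) * (Uᵀ * E)).trace = _
    rw [← Matrix.mul_assoc, Matrix.trace_mul_comm, Matrix.mul_assoc]
    exact Matrix.trace_fin_one _
  rw [key, hc hs]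
  by_cases hhs : hs = hs0
  · subst hhs
    simp [Pi.single_apply]
  · have : ∃ l, hs l ≠ hs0 l := by
      by_contra hall
      push_neg at hall
      exact hhs (funext hall)
    obtain ⟨l, hl⟩ := this
    rw [Pi.single_apply, if_neg hhs]
    exact Finset.prod_eq_zero (Finset.mem_univ l) (by simp [hl])
end

section
/- (Lower bound for shared-attention universal transformers.) Let d_in = 1. Suppose there exist matrices {R_V^{l,h} ∈ R^{m×m}}_{l∈[L],h∈[H]} such that: for every choice of scalars W_V^{l,h}, W_O^{l,h} ∈ R and every choice of row-stochastic matrices A^{l,h} ∈ R^{n×n} (for every n), there exist E ∈ R^{1×m} and U ∈ R^{m×1} with Σ_{(h_1,...,h_L)∈[H]^L} A^{L,h_L}···A^{1,h_1} X^0 (Π_{l=1}^L W_V^{l,h_l} W_O^{l,h_l}) = Σ_{(h_1,...,h_L)} A^{L,h_L}···A^{1,h_1} X^0 E R_V^{1,h_1}···R_V^{L,h_L} U for all X^0 ∈ R^{n×1} and all n. Then m ≥ H^{L/2}. -/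
open Matrix

/-- A square matrix is row-stochastic if its entries are nonnegative and each
row sums to `1`. -/
def IsRowStochastic {n : ℕ} (M : Matrix (Fin n) (Fin n) ℝ) : Prop :=
  (∀ i j, 0 ≤ M i j) ∧ ∀ i, ∑ j, M i j = 1

/-- `A^{L,h_L} ⋯ A^{1,h_1}`: the attention matrices along the path `hs`,
multiplied in decreasing layer order. -/
def aPathRev {n H L : ℕ} (A : Fin L → Fin H → Matrix (Fin n) (Fin n) ℝ)
    (hs : Fin L → Fin H) : Matrix (Fin n) (Fin n) ℝ :=
  (List.ofFn fun l : Fin L => A l.rev (hs l.rev)).prod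

/-- `R_V^{1,h_1} ⋯ R_V^{L,h_L}`: the value-routing matrices along the path
`hs`, multiplied in increasing layer order. -/
def rPathProd {m H L : ℕ} (RV : Fin L → Fin H → Matrix (Fin m) (Fin m) ℝ)
    (hs : Fin L → Fin H) : Matrix (Fin m) (Fin m) ℝ :=
  (List.ofFn fun l : Fin L => RV l (hs l)).prod

/-!
Take attention matrices equal to the identity on the heads of a fixed path `hs₀` and attending
to the last token elsewhere. On the first unit vector every other path product then vanishes, so
universality forces `∏ₗ W_V W_O = E R_hs U = tr (R_hs · U E)` for every path `hs`, where
`R_hs = R_V^{1,h_1} ⋯ R_V^{L,h_L}`. With path indicators as weights, `M ↦ (tr (R_hs M))_hs`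
maps the `m²`-dimensional space of matrices onto `ℝ^{H^L}`, whence `H^L ≤ m²`.
-/

lemma list_ofFn_prod_ite_one_mul {R ι κ : Type*} [Semiring R] [Fintype ι] [DecidableEq ι]
    {L : ℕ} (K : Matrix ι ι R) (v : Matrix ι κ R) (hK : K * v = 0) (p : Fin L → Prop)
    [DecidablePred p] :
    (List.ofFn fun l => if p l then (1 : Matrix ι ι R) else K).prod * v =
      if ∀ l, p l then v else 0 := by
  induction L with
  | zero => simp
  | succ L ih =>
    rw [List.ofFn_succ, List.prod_cons, Matrix.mul_assoc, ih fun l => p l.succ]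
    simp only [Fin.forall_fin_succ]
    by_cases h0 : p 0 <;> by_cases hs : ∀ l : Fin L, p l.succ <;> simp [h0, hs, hK]

def attendLast (n : ℕ) : Matrix (Fin n) (Fin n) ℝ :=
  Matrix.of fun _ j => if (j : ℕ) = n - 1 then 1 else 0

def firstUnitCol (n : ℕ) : Matrix (Fin n) (Fin 1) ℝ :=
  Matrix.of fun i _ => if (i : ℕ) = 0 then 1 else 0

lemma isRowStochastic_one (n : ℕ) : IsRowStochastic (1 : Matrix (Fin n) (Fin n) ℝ) :=
  ⟨fun i j => by rw [Matrix.one_apply]; positivity, fun i => by simp [Matrix.one_apply]⟩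

lemma isRowStochastic_attendLast (n : ℕ) : IsRowStochastic (attendLast n) := by
  refine ⟨fun i j => by simp only [attendLast, Matrix.of_apply]; positivity, fun i => ?_⟩
  have hlast : ∀ j : Fin n, (j : ℕ) = n - 1 ↔ j = ⟨n - 1, by have := i.pos; omega⟩ :=
    fun j => by simp [Fin.ext_iff]
  simp [attendLast, hlast]

lemma attendLast_mul_firstUnitCol {n : ℕ} (hn : 2 ≤ n) : attendLast n * firstUnitCol n = 0 := by
  ext i k
  simp only [attendLast, firstUnitCol, Matrix.mul_apply, Matrix.of_apply, Matrix.zero_apply]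
  exact Finset.sum_eq_zero fun j _ => by split_ifs <;> first | omega | simp

lemma firstUnitCol_apply_zero {n : ℕ} (hn : 0 < n) : firstUnitCol n ⟨0, hn⟩ 0 = 1 := by
  simp [firstUnitCol]

section Isolation

variable {H L : ℕ}

def isolatingAttention (n : ℕ) (hs₀ : Fin L → Fin H) (l : Fin L) (h : Fin H) :
    Matrix (Fin n) (Fin n) ℝ :=
  if h = hs₀ l then 1 else attendLast n

lemma isRowStochastic_isolatingAttention (n : ℕ) (hs₀ : Fin L → Fin H) (l : Fin L)
    (h : Fin H) : IsRowStochastic (isolatingAttention n hs₀ l h) := by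
  unfold isolatingAttention
  split_ifs
  exacts [isRowStochastic_one n, isRowStochastic_attendLast n]

lemma aPathRev_isolatingAttention_mul {n : ℕ} (hn : 2 ≤ n) (hs₀ hs : Fin L → Fin H) :
    aPathRev (isolatingAttention n hs₀) hs * firstUnitCol n =
      if hs = hs₀ then firstUnitCol n else 0 := by
  simp only [aPathRev, isolatingAttention]
  rw [list_ofFn_prod_ite_one_mul _ _ (attendLast_mul_firstUnitCol hn)]
  have hrev : (∀ l : Fin L, hs l.rev = hs₀ l.rev) ↔ hs = hs₀ :=
    Fin.rev_surjective.forall.symm.trans funext_iff.symm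
  simp only [hrev]

/-- Context length `n = encode hs₀ + 2` is reserved for isolating the path `hs₀`, so that one
attention family isolates every path; `n ≥ 2` keeps `attendLast n` from seeing the first token. -/
def encodedAttention (n : ℕ) : Fin L → Fin H → Matrix (Fin n) (Fin n) ℝ :=
  match (Encodable.decode (n - 2) : Option (Fin L → Fin H)) with
  | some hs₀ => isolatingAttention n hs₀
  | none => fun _ _ => 1

lemma encodedAttention_encode (hs₀ : Fin L → Fin H) :
    encodedAttention (Encodable.encode hs₀ + 2) = isolatingAttention _ hs₀ := by
  simp [encodedAttention]

lemma isRowStochastic_encodedAttention (n : ℕ) (l : Fin L) (h : Fin H) :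
    IsRowStochastic (encodedAttention n l h) := by
  unfold encodedAttention
  cases (Encodable.decode (n - 2) : Option (Fin L → Fin H))
  exacts [isRowStochastic_one n, isRowStochastic_isolatingAttention n _ l h]

lemma pathWeight_eq_of_sum_eq {n : ℕ} (hn : 2 ≤ n) (hs₀ : Fin L → Fin H)
    (c : (Fin L → Fin H) → ℝ) (d : (Fin L → Fin H) → Matrix (Fin 1) (Fin 1) ℝ)
    (h : ∑ hs, c hs • (aPathRev (isolatingAttention n hs₀) hs * firstUnitCol n) =
      ∑ hs, aPathRev (isolatingAttention n hs₀) hs * firstUnitCol n * d hs) :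
    c hs₀ = d hs₀ 0 0 := by
  simp only [aPathRev_isolatingAttention_mul hn] at h
  rw [Finset.sum_eq_single hs₀ (fun hs _ hne => by simp [hne]) (by simp),
    Finset.sum_eq_single hs₀ (fun hs _ hne => by simp [hne]) (by simp), if_pos rfl] at h
  have h00 := congrFun (congrFun h ⟨0, by omega⟩) 0
  simpa [Matrix.mul_apply, firstUnitCol_apply_zero] using h00

end Isolation

lemma mul_mul_apply_zero_zero_eq_trace {ι R : Type*} [Fintype ι] [CommSemiring R]
    (E : Matrix (Fin 1) ι R) (M : Matrix ι ι R) (U : Matrix ι (Fin 1) R) :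
    (E * M * U) 0 0 = trace (M * (U * E)) := by
  rw [← trace_fin_one (E * M * U), trace_mul_cycle, trace_mul_comm]

def pathTraceMap {m H L : ℕ} (RV : Fin L → Fin H → Matrix (Fin m) (Fin m) ℝ) :
    Matrix (Fin m) (Fin m) ℝ →ₗ[ℝ] (Fin L → Fin H) → ℝ :=
  LinearMap.pi fun hs => traceLinearMap (Fin m) ℝ ℝ ∘ₗ LinearMap.mulLeft ℝ (rPathProd RV hs)

lemma pathTraceMap_surjective {m H L : ℕ} (RV : Fin L → Fin H → Matrix (Fin m) (Fin m) ℝ)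
    (hmatch : ∀ WV WO : Fin L → Fin H → ℝ, ∃ (E : Matrix (Fin 1) (Fin m) ℝ)
      (U : Matrix (Fin m) (Fin 1) ℝ),
      ∀ hs, ∏ l, WV l (hs l) * WO l (hs l) = (E * rPathProd RV hs * U) 0 0) :
    Function.Surjective (pathTraceMap RV) := by
  rw [← LinearMap.range_eq_top, eq_top_iff, ← (Pi.basisFun ℝ _).span_eq, Submodule.span_le,
    Set.range_subset_iff]
  intro hs₀
  obtain ⟨E, U, hEU⟩ := hmatch (fun l h => if h = hs₀ l then 1 else 0) 1
  refine ⟨U * E, funext fun hs => ?_⟩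
  simp [pathTraceMap, ← mul_mul_apply_zero_zero_eq_trace, ← hEU, Finset.prod_boole,
    Pi.single_apply, funext_iff]

lemma Real.rpow_div_two_le_of_pow_le_sq {x y : ℝ} (hx : 0 ≤ x) (hy : 0 ≤ y) {k : ℕ}
    (h : x ^ k ≤ y ^ 2) : x ^ ((k : ℝ) / 2) ≤ y := by
  rw [div_eq_mul_one_div, Real.rpow_mul hx, Real.rpow_natCast, ← Real.sqrt_eq_rpow]
  exact Real.sqrt_le_iff.2 ⟨hy, h⟩

/-- lower bound for shared-attention universal transformers,
`d_in = 1`: if fixed routing matrices `R_V^{l,h} ∈ ℝ^{m×m}` can reproduce, for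
every choice of scalar value/output parameters and every family of
row-stochastic attention matrices (for every context length `n`), the target
path expansion via some embedding `E` and unembedding `U`, then `m ≥ H^{L/2}`. -/
theorem stmt17 {m H L : ℕ}
    (RV : Fin L → Fin H → Matrix (Fin m) (Fin m) ℝ)
    (huniv : ∀ (WV WO : Fin L → Fin H → ℝ)
        (A : (n : ℕ) → Fin L → Fin H → Matrix (Fin n) (Fin n) ℝ),
        (∀ n l h, IsRowStochastic (A n l h)) →
        ∃ (E : Matrix (Fin 1) (Fin m) ℝ) (U : Matrix (Fin m) (Fin 1) ℝ),
          ∀ (n : ℕ) (X0 : Matrix (Fin n) (Fin 1) ℝ),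
            ∑ hs : Fin L → Fin H,
              (∏ l : Fin L, WV l (hs l) * WO l (hs l)) • (aPathRev (A n) hs * X0) =
            ∑ hs : Fin L → Fin H,
              aPathRev (A n) hs * X0 * (E * rPathProd RV hs * U)) :
    (H : ℝ) ^ ((L : ℝ) / 2) ≤ (m : ℝ) := by
  have hmatch : ∀ WV WO : Fin L → Fin H → ℝ, ∃ (E : Matrix (Fin 1) (Fin m) ℝ)
      (U : Matrix (Fin m) (Fin 1) ℝ),
      ∀ hs, ∏ l, WV l (hs l) * WO l (hs l) = (E * rPathProd RV hs * U) 0 0 := by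
    intro WV WO
    obtain ⟨E, U, hEU⟩ := huniv WV WO encodedAttention isRowStochastic_encodedAttention
    refine ⟨E, U, fun hs₀ => ?_⟩
    have hEU₀ := hEU (Encodable.encode hs₀ + 2) (firstUnitCol _)
    rw [encodedAttention_encode] at hEU₀
    exact pathWeight_eq_of_sum_eq (by omega) hs₀ _ (fun hs => E * rPathProd RV hs * U) hEU₀
  have hcard : H ^ L ≤ m * m := by
    simpa [Module.finrank_fintype_fun_eq_card, Module.finrank_matrix] using
      LinearMap.finrank_le_finrank_of_surjective (pathTraceMap_surjective RV hmatch)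
  exact Real.rpow_div_two_le_of_pow_le_sq (Nat.cast_nonneg H) (Nat.cast_nonneg m)
    (by exact_mod_cast hcard.trans_eq (sq m).symm)
end
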